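/- arXiv:2511.12684 — 5 statements merged into one kernel-verified Lean document; each statement's English description precedes it below -/
import Mathlib

section
/- Suppose A, B, C, D : ℝ → ℝ satisfy A(x)D(x) - B(x)C(x) = 1 for all x, t ∈ ℝ, γ > 0, c > 1, and both (t·A(x) - C(x))² + γ²·A(x)² ≤ c·exp(|x|) and (t·B(x) - D(x))² + γ²·B(x)² ≤ c·exp(|x|) hold for all real x. Then |log((t·B(x) - D(x))² + γ²·B(x)²)| ≤ log c + 2|log γ| + |x| for all x ∈ ℝ. -/
theorem log_bound_of_exponential_bounds
    (A B C D : ℝ → ℝ) (hdet : ∀ x, A x * D x - B x * C x = 1)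
    (t γ c : ℝ) (hγ : 0 < γ) (hc : 1 < c)
    (hA : ∀ x : ℝ, (t * A x - C x) ^ 2 + γ ^ 2 * (A x) ^ 2 ≤ c * Real.exp |x|)
    (hB : ∀ x : ℝ, (t * B x - D x) ^ 2 + γ ^ 2 * (B x) ^ 2 ≤ c * Real.exp |x|) :
    ∀ x : ℝ, |Real.log ((t * B x - D x) ^ 2 + γ ^ 2 * (B x) ^ 2)| ≤
      Real.log c + 2 * |Real.log γ| + |x| := by
  intro x
  set P := (t * A x - C x) ^ 2 + γ ^ 2 * (A x) ^ 2 with hP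
  set Q := (t * B x - D x) ^ 2 + γ ^ 2 * (B x) ^ 2 with hQ
  have hc0 : (0:ℝ) < c := lt_trans one_pos hc
  have hce : 0 < c * Real.exp |x| := mul_pos hc0 (Real.exp_pos _)
  have hγ2 : (0:ℝ) < γ ^ 2 := by positivity
  -- Cauchy-Schwarz with the determinant: P * Q ≥ γ^2
  have hkey : γ ^ 2 ≤ P * Q := by
    have hd := hdet x
    have hd1 : (t * A x - C x) * B x - (t * B x - D x) * A x = 1 := by linear_combination hd
    rw [hP, hQ]
    have heq : ((t * A x - C x) ^ 2 + γ ^ 2 * A x ^ 2) * ((t * B x - D x) ^ 2 + γ ^ 2 * B x ^ 2)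
        = ((t * A x - C x) * (t * B x - D x) + γ ^ 2 * A x * B x) ^ 2 + γ ^ 2 := by
      linear_combination (γ ^ 2 * ((t * A x - C x) * B x - (t * B x - D x) * A x + 1)) * hd1
    nlinarith [sq_nonneg ((t * A x - C x) * (t * B x - D x) + γ ^ 2 * A x * B x)]
  have hPle := hA x
  have hQle := hB x
  have hPnn : 0 ≤ P := by rw [hP]; positivity
  have hQpos : 0 < Q := by nlinarith [hkey, hPnn]
  -- lower bound on Q
  have hQlow : γ ^ 2 / (c * Real.exp |x|) ≤ Q := by
    rw [div_le_iff₀ hce]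
    nlinarith [mul_le_mul_of_nonneg_right hPle (le_of_lt hQpos)]
  have h1 : Real.log Q ≤ Real.log c + |x| := by
    calc Real.log Q ≤ Real.log (c * Real.exp |x|) := Real.log_le_log hQpos hQle
      _ = Real.log c + |x| := by rw [Real.log_mul (ne_of_gt hc0) (Real.exp_ne_zero _), Real.log_exp]
  have h2 : 2 * Real.log γ - Real.log c - |x| ≤ Real.log Q := by
    have := Real.log_le_log (by positivity) hQlow
    calc 2 * Real.log γ - Real.log c - |x|
        = Real.log (γ ^ 2 / (c * Real.exp |x|)) := by
          rw [Real.log_div (by positivity) (ne_of_gt hce),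
            Real.log_mul (ne_of_gt hc0) (Real.exp_ne_zero _), Real.log_exp,
            Real.log_pow]
          push_cast; ring
      _ ≤ Real.log Q := this
  have hlogc : 0 ≤ Real.log c := Real.log_nonneg (le_of_lt hc)
  rw [abs_le]
  constructor
  · nlinarith [abs_nonneg x, neg_abs_le (Real.log γ)]
  · nlinarith [abs_nonneg x, abs_nonneg (Real.log γ)]
end

section
/- Fix 0 < q < 1 and 1 < α < β. For each n ≥ 0 and every x ∈ [α·q^{-n}, β·q^{-n}], one has ((x;q)_∞)² ≥ (α-1)²·α^{2n}·q^{-n(n+1)}·((q/α;q)_∞)²·((βq;q)_∞)². -/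
lemma aux_factor_pos {q c : ℝ} (hq0 : 0 < q) (hq1 : q < 1) (hc0 : 0 ≤ c) (hc1 : c < 1)
    (k : ℕ) : 0 < 1 - c * q ^ k := by
  have h1 : q ^ k ≤ 1 := pow_le_one₀ hq0.le hq1.le
  nlinarith [pow_nonneg hq0.le k]

lemma aux_summable_log {q c : ℝ} (hq0 : 0 < q) (hq1 : q < 1) (hc0 : 0 ≤ c) (hc1 : c < 1) :
    Summable (fun k : ℕ => Real.log (1 - c * q ^ k)) := by
  have hpos := aux_factor_pos hq0 hq1 hc0 hc1
  rw [← summable_neg_iff]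
  apply Summable.of_nonneg_of_le (fun k => ?_) (fun k => ?_)
    ((summable_geometric_of_lt_one hq0.le hq1).mul_left (c / (1 - c)))
  · rw [neg_nonneg]
    exact Real.log_nonpos (hpos k).le (by nlinarith [pow_nonneg hq0.le k])
  · rw [← Real.log_inv]
    have h2 : (0:ℝ) < 1 - c * q ^ k := hpos k
    have h3 : q ^ k ≤ 1 := pow_le_one₀ hq0.le hq1.le
    have h4 : 0 ≤ q ^ k := pow_nonneg hq0.le k
    calc Real.log (1 - c*q^k)⁻¹ ≤ (1 - c*q^k)⁻¹ - 1 :=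
          Real.log_le_sub_one_of_pos (by positivity)
      _ = (c * q ^ k) / (1 - c * q ^ k) := by field_simp; ring
      _ ≤ (c * q ^ k) / (1 - c) := by
          apply div_le_div_of_nonneg_left (by positivity) (by linarith)
          nlinarith
      _ = c / (1-c) * q ^ k := by ring

lemma aux_hasProd {q c : ℝ} (hq0 : 0 < q) (hq1 : q < 1) (hc0 : 0 ≤ c) (hc1 : c < 1) :
    HasProd (fun k : ℕ => 1 - c * q ^ k)
      (Real.exp (∑' k : ℕ, Real.log (1 - c * q ^ k))) := by
  have key : (fun k : ℕ => Real.exp (Real.log (1 - c*q^k))) = fun k : ℕ => 1 - c*q^k :=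
    funext fun k => Real.exp_log (aux_factor_pos hq0 hq1 hc0 hc1 k)
  have h := (aux_summable_log hq0 hq1 hc0 hc1).hasSum.rexp
  simp only [Function.comp_def] at h
  rwa [key] at h

lemma aux_mult {q c : ℝ} (hq0 : 0 < q) (hq1 : q < 1) (hc0 : 0 ≤ c) (hc1 : c < 1) :
    Multipliable (fun k : ℕ => 1 - c * q ^ k) :=
  (aux_hasProd hq0 hq1 hc0 hc1).multipliable

lemma aux_pos {q c : ℝ} (hq0 : 0 < q) (hq1 : q < 1) (hc0 : 0 ≤ c) (hc1 : c < 1) :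
    0 < ∏' k : ℕ, (1 - c * q ^ k) := by
  rw [(aux_hasProd hq0 hq1 hc0 hc1).tprod_eq]
  exact Real.exp_pos _

lemma aux_le_one {q c : ℝ} (hq0 : 0 < q) (hq1 : q < 1) (hc0 : 0 ≤ c) (hc1 : c < 1) :
    (∏' k : ℕ, (1 - c * q ^ k)) ≤ 1 := by
  rw [(aux_hasProd hq0 hq1 hc0 hc1).tprod_eq]
  refine le_trans (Real.exp_le_exp.mpr ?_) (le_of_eq Real.exp_zero)
  apply tsum_nonpos
  intro k
  exact Real.log_nonpos (aux_factor_pos hq0 hq1 hc0 hc1 k).le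
    (by nlinarith [pow_nonneg hq0.le k])

lemma aux_mono {q c d : ℝ} (hq0 : 0 < q) (hq1 : q < 1) (hd0 : 0 ≤ d) (hdc : d ≤ c)
    (hc1 : c < 1) :
    (∏' k : ℕ, (1 - c * q ^ k)) ≤ ∏' k : ℕ, (1 - d * q ^ k) := by
  have hc0 : 0 ≤ c := hd0.trans hdc
  have hd1 : d < 1 := lt_of_le_of_lt hdc hc1
  rw [(aux_hasProd hq0 hq1 hc0 hc1).tprod_eq, (aux_hasProd hq0 hq1 hd0 hd1).tprod_eq,
    Real.exp_le_exp]
  apply Summable.tsum_le_tsum _ (aux_summable_log hq0 hq1 hc0 hc1) (aux_summable_log hq0 hq1 hd0 hd1)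
  intro k
  have h4 : 0 ≤ q ^ k := pow_nonneg hq0.le k
  apply Real.log_le_log (aux_factor_pos hq0 hq1 hc0 hc1 k)
  nlinarith

set_option maxHeartbeats 2000000 in
theorem qPochhammer_sq_lower_bound_on_interval
    (q α β : ℝ) (hq0 : 0 < q) (hq1 : q < 1)
    (hα : 1 < α) (hαβ : α < β) (hβ : β < 1 / q)
    (n : ℕ) (x : ℝ) (hx : x ∈ Set.Icc (α * q ^ (-(n : ℤ))) (β * q ^ (-(n : ℤ)))) :
    (∏' k : ℕ, (1 - x * q ^ k)) ^ 2 ≥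
      (α - 1) ^ 2 * α ^ (2 * n) * q ^ (-(n : ℤ) * (n + 1)) *
      (∏' k : ℕ, (1 - (q / α) * q ^ k)) ^ 2 *
      (∏' k : ℕ, (1 - β * q * q ^ k)) ^ 2 := by
  obtain ⟨hx1, hx2⟩ := hx
  rw [zpow_neg, zpow_natCast] at hx1 hx2
  have hα0 : (0:ℝ) < α := lt_trans one_pos hα
  have hβ0 : (0:ℝ) < β := lt_trans hα0 hαβ
  have hqn0 : (0:ℝ) < q ^ n := pow_pos hq0 n
  have hβq1 : β * q < 1 := by
    rw [lt_div_iff₀ hq0] at hβ; linarith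
  have hβq0 : 0 < β * q := mul_pos hβ0 hq0
  have hx0 : 0 < x := lt_of_lt_of_le (by positivity) hx1
  -- rewrite the zpow in the goal
  have hQ : q ^ (-(n:ℤ) * ((n:ℤ)+1)) = (q ^ (n*(n+1)))⁻¹ := by
    rw [← zpow_natCast q (n*(n+1)), ← zpow_neg]
    congr 1
    push_cast
    ring
  -- tail constant
  have hcq : x * q ^ (n+1) ≤ β * q := by
    have h := mul_le_mul_of_nonneg_right hx2 (le_of_lt (pow_pos hq0 (n+1)))
    calc x * q^(n+1) ≤ β * (q^n)⁻¹ * q^(n+1) := h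
      _ = β * q := by field_simp [pow_succ]; ring
  have hc0 : 0 < x * q ^ (n+1) := by positivity
  have hc1 : x * q^(n+1) < 1 := lt_of_le_of_lt hcq hβq1
  set f : ℕ → ℝ := fun k => 1 - x * q ^ k with hf
  have htaileq : ∀ k : ℕ, 1 - x * q^(n+1) * q ^ k = f (k + (n+1)) := by
    intro k; simp only [hf]; rw [pow_add]; ring
  have htail : Multipliable (fun k : ℕ => f (k + (n+1))) :=
    (aux_mult hq0 hq1 hc0.le hc1).congr htaileq
  have hsplit := Multipliable.prod_mul_tprod_nat_mul' (f := f) (k := n+1) htail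
  rw [← hsplit, mul_pow, hQ]
  set T := ∏' k : ℕ, f (k + (n+1)) with hT
  -- B bound
  have hBpos : 0 < ∏' k : ℕ, (1 - β*q*q^k) := aux_pos hq0 hq1 hβq0.le hβq1
  have hBT : (∏' k : ℕ, (1 - β*q*q^k)) ≤ T := by
    rw [hT, ← tprod_congr htaileq]
    exact aux_mono hq0 hq1 hc0.le hcq hβq1
  -- A facts
  have hqα0 : (0:ℝ) ≤ q/α := by positivity
  have hqα1 : q/α < 1 := by rw [div_lt_one hα0]; linarith
  set h : ℕ → ℝ := fun k => 1 - q/α * q^k with hh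
  have hhpos : ∀ k, 0 < h k := fun k => aux_factor_pos hq0 hq1 hqα0 hqα1 k
  have hApos : 0 < ∏' k : ℕ, h k := aux_pos hq0 hq1 hqα0 hqα1
  have hc'0 : (0:ℝ) ≤ q/α * q^n := by positivity
  have hc'1 : q/α * q^n < 1 := by
    have h1 : q ^ n ≤ 1 := pow_le_one₀ hq0.le hq1.le
    nlinarith
  have htaileqA : ∀ k : ℕ, 1 - q/α * q^n * q ^ k = h (k + n) := by
    intro k; simp only [hh]; rw [pow_add]; ring
  have hhtail : Multipliable (fun k : ℕ => h (k + n)) :=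
    (aux_mult hq0 hq1 hc'0 hc'1).congr htaileqA
  have hsplitA := Multipliable.prod_mul_tprod_nat_mul' (f := h) (k := n) hhtail
  have htail_le_one : (∏' k : ℕ, h (k+n)) ≤ 1 := by
    rw [← tprod_congr htaileqA]
    exact aux_le_one hq0 hq1 hc'0 hc'1
  have htail_nonneg : 0 ≤ ∏' k : ℕ, h (k+n) := by
    rw [← tprod_congr htaileqA]
    exact (aux_pos hq0 hq1 hc'0 hc'1).le
  have hfinpos : 0 < ∏ i ∈ Finset.range n, h i :=
    Finset.prod_pos fun i _ => hhpos i
  have hAle : (∏' k : ℕ, h k) ≤ ∏ i ∈ Finset.range n, h i := by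
    rw [← hsplitA]
    nlinarith
  -- finite part
  set g : ℕ → ℝ := fun i => α * q^i * (q^n)⁻¹ - 1 with hg
  have hgnonneg : ∀ i ∈ Finset.range (n+1), 0 ≤ g i := by
    intro i hi
    have hi' : i ≤ n := Nat.lt_succ_iff.mp (Finset.mem_range.mp hi)
    have h1 : q^n ≤ q^i := pow_le_pow_of_le_one hq0.le hq1.le hi'
    have h2 : (1:ℝ) ≤ q^i * (q^n)⁻¹ := by
      rw [← div_eq_mul_inv, one_le_div hqn0]; exact h1
    simp only [hg]
    nlinarith
  have hterm : ∀ i ∈ Finset.range (n+1), g i ^ 2 ≤ f i ^ 2 := by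
    intro i hi
    have h0 := hgnonneg i hi
    have h2 : g i ≤ -(f i) := by
      simp only [hg, hf]
      have := mul_le_mul_of_nonneg_right hx1 (pow_nonneg hq0.le i)
      nlinarith
    calc g i ^2 ≤ (-(f i))^2 := pow_le_pow_left₀ h0 h2 2
      _ = f i ^2 := by ring
  have hF2 : (∏ i ∈ Finset.range (n+1), g i)^2 ≤ (∏ i ∈ Finset.range (n+1), f i)^2 := by
    rw [← Finset.prod_pow, ← Finset.prod_pow]
    exact Finset.prod_le_prod (fun i _ => sq_nonneg _) hterm
  -- product identity for g
  have hgprod : ∏ i ∈ Finset.range (n+1), g i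
      = α^(n+1) * (∏ j ∈ Finset.range (n+1), ((q:ℝ)^j)⁻¹) *
        ((1 - 1/α) * ∏ i ∈ Finset.range n, h i) := by
    have key : ∀ j ∈ Finset.range (n+1),
        g j = (fun j => α * ((q:ℝ)^j)⁻¹ * (1 - q^j/α)) (n+1-1-j) := by
      intro j hj
      have hj' : j ≤ n := Nat.lt_succ_iff.mp (Finset.mem_range.mp hj)
      have hpow : (q:ℝ)^(n+1-1-j) * q^j = q^n := by
        rw [← pow_add]; congr 1; omega
      have hnz : ((q:ℝ)^(n+1-1-j)) ≠ 0 := by positivity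
      have hnz2 : ((q:ℝ)^j) ≠ 0 := by positivity
      have hnzn : ((q:ℝ)^n) ≠ 0 := by positivity
      have hα0 : (0:ℝ) < α := lt_trans one_pos hα
      have hinv : ((q:ℝ)^(n+1-1-j))⁻¹ = q^j * (q^n)⁻¹ := by
        rw [show (q:ℝ)^n = q^(n+1-1-j) * q^j from hpow.symm, mul_inv, mul_left_comm,
          mul_inv_cancel₀ hnz2, mul_one]
      have expand : α * ((q:ℝ)^(n+1-1-j))⁻¹ * (1 - q^(n+1-1-j)/α)
          = α * ((q:ℝ)^(n+1-1-j))⁻¹ - 1 := by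
        field_simp
      simp only [hg]
      show α * q ^ j * (q ^ n)⁻¹ - 1
          = α * ((q:ℝ)^(n+1-1-j))⁻¹ * (1 - q^(n+1-1-j)/α)
      rw [expand, hinv]
      ring
    rw [Finset.prod_congr rfl key,
      Finset.prod_range_reflect (fun j => α * ((q:ℝ)^j)⁻¹ * (1 - q^j/α)) (n+1)]
    rw [show (fun j => α * ((q:ℝ)^j)⁻¹ * (1 - q^j/α)) = fun j => (α * ((q:ℝ)^j)⁻¹) * (1 - q^j/α)
      from rfl]
    rw [Finset.prod_mul_distrib, Finset.prod_mul_distrib, Finset.prod_const,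
      Finset.card_range]
    rw [Finset.prod_range_succ' (fun j => 1 - (q:ℝ)^j/α) n]
    have e1 : ∀ i, 1 - (q:ℝ)^(i+1)/α = h i := by
      intro i; simp only [hh]; rw [pow_succ]; ring
    rw [Finset.prod_congr rfl (fun i _ => e1 i)]
    rw [pow_zero]
    ring
  -- power sum
  have hqS : (∏ j ∈ Finset.range (n+1), ((q:ℝ)^j)⁻¹)^2 = (q^(n*(n+1)))⁻¹ := by
    rw [Finset.prod_inv_distrib, Finset.prod_pow_eq_pow_sum, inv_pow, ← pow_mul]
    congr 1
    rw [Finset.sum_range_id_mul_two (n+1)]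
    simp [Nat.mul_comm]
  have hgsq : (∏ i ∈ Finset.range (n+1), g i)^2
      = (α-1)^2 * α^(2*n) * (q^(n*(n+1)))⁻¹ * (∏ i ∈ Finset.range n, h i)^2 := by
    have hAC : (α^(n+1))^2 * ((1-1/α)^2) = (α-1)^2 * α^(2*n) := by
      have h1 : α^(n+1) * (1-1/α) = α^n * (α - 1) := by
        rw [pow_succ]
        field_simp
      calc (α^(n+1))^2 * ((1-1/α)^2) = (α^(n+1) * (1-1/α))^2 := by ring
        _ = (α^n * (α-1))^2 := by rw [h1]
        _ = (α-1)^2 * α^(2*n) := by rw [mul_pow, ← pow_mul]; ring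
    rw [hgprod]
    linear_combination ((α^(n+1))^2*(1-1/α)^2*(∏ i ∈ Finset.range n, h i)^2) * hqS
      + ((q^(n*(n+1)))⁻¹*(∏ i ∈ Finset.range n, h i)^2) * hAC
  -- final assembly
  rw [ge_iff_le]
  have hA2 : (∏' k : ℕ, h k)^2 ≤ (∏ i ∈ Finset.range n, h i)^2 :=
    pow_le_pow_left₀ hApos.le hAle 2
  have hB2 : (∏' k : ℕ, (1 - β*q*q^k))^2 ≤ T^2 :=
    pow_le_pow_left₀ hBpos.le hBT 2
  calc (α-1)^2 * α^(2*n) * (q^(n*(n+1)))⁻¹ * (∏' k : ℕ, h k)^2 * (∏' k : ℕ, (1 - β*q*q^k))^2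
      ≤ (α-1)^2 * α^(2*n) * (q^(n*(n+1)))⁻¹ * (∏ i ∈ Finset.range n, h i)^2 * T^2 := by
        have hK : (0:ℝ) ≤ (α-1)^2 * α^(2*n) * (q^(n*(n+1)))⁻¹ := by positivity
        apply mul_le_mul (mul_le_mul_of_nonneg_left hA2 hK) hB2 (sq_nonneg _)
        positivity
    _ = (∏ i ∈ Finset.range (n+1), g i)^2 * T^2 := by rw [hgsq]
    _ ≤ (∏ i ∈ Finset.range (n+1), f i)^2 * T^2 := by
        apply mul_le_mul_of_nonneg_right hF2 (sq_nonneg _)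
end

section
/- Fix 0 < q < 1 < a < 1/q. The function x ↦ ((x;q)_∞)² + ((x/a;q)_∞)² tends to infinity faster than any power of |x| as |x| → ∞; i.e., for every m ∈ ℕ, (((x;q)_∞)² + ((x/a;q)_∞)²)/|x|^m → ∞ as |x| → ∞. -/
open Filter

section PhiHelpers

set_option maxHeartbeats 1000000

variable {q : ℝ}



private lemma abs_log_one_sub_le {u : ℝ} (h : |u| ≤ 1/2) : |Real.log (1 - u)| ≤ 2 * |u| := by
  have h1 : |u| < 1 := lt_of_le_of_lt h (by norm_num)
  have h0 := Real.abs_log_sub_add_sum_range_le h1 0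
  simp only [Finset.range_zero, Finset.sum_empty, zero_add, pow_one] at h0
  calc |Real.log (1-u)| ≤ |u| / (1 - |u|) := h0
    _ ≤ 2 * |u| := by
        rw [div_le_iff₀ (by linarith)]
        nlinarith [abs_nonneg u]

private lemma summable_log_aux (hq0 : 0 < q) (hq1 : q < 1) {c : ℝ} (hc : |c| ≤ 1/2) :
    Summable fun k : ℕ ↦ Real.log (1 - c * q ^ k) := by
  apply Summable.of_norm_bounded
    ((summable_geometric_of_lt_one hq0.le hq1).mul_left (2 * |c|))
  intro k
  have hqk1 : q ^ k ≤ 1 := pow_le_one₀ hq0.le hq1.le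
  have hqk0 : (0:ℝ) ≤ q ^ k := pow_nonneg hq0.le k
  have habs : |c * q ^ k| = |c| * q ^ k := by
    rw [abs_mul, abs_of_nonneg hqk0]
  have h2 : |c * q ^ k| ≤ 1/2 := by rw [habs]; nlinarith [abs_nonneg c]
  have := abs_log_one_sub_le h2
  rw [habs] at this
  simpa [mul_assoc] using this

private lemma multipliable_aux (hq0 : 0 < q) (hq1 : q < 1) (c : ℝ) :
    Multipliable fun k : ℕ ↦ 1 - c * q ^ k := by
  obtain ⟨N, hN⟩ : ∃ N : ℕ, |c| * q ^ N ≤ 1/2 := by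
    have h := ((tendsto_pow_atTop_nhds_zero_of_lt_one hq0.le hq1).const_mul |c|)
    rw [mul_zero] at h
    exact (h.eventually_lt_const (by norm_num : (0:ℝ) < 1/2)).exists.imp
      fun N h => h.le
  apply Multipliable.comp_nat_add (k := N)
  have hc' : |c * q ^ N| ≤ 1/2 := by
    rwa [abs_mul, abs_of_nonneg (pow_nonneg hq0.le N)]
  have hpos : ∀ (_ : Unit) (k : ℕ), 0 < 1 - (c * q ^ N) * q ^ k := by
    intro _ k
    have h1 : (c * q ^ N) * q ^ k ≤ |c * q ^ N| * q ^ k :=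
      mul_le_mul_of_nonneg_right (le_abs_self _) (pow_nonneg hq0.le k)
    have h2 : |c * q ^ N| * q ^ k ≤ 1/2 * 1 := by
      apply mul_le_mul hc' (pow_le_one₀ hq0.le hq1.le) (pow_nonneg hq0.le k) (by norm_num)
    nlinarith
  have hsum : ∀ (_ : Unit), Summable fun k : ℕ ↦ Real.log (1 - (c * q ^ N) * q ^ k) :=
    fun _ => summable_log_aux hq0 hq1 hc'
  have := Real.multipliable_of_summable_log (hpos ()) (hsum ())
  exact this.congr fun k => by rw [pow_add]; ring

private lemma tprod_tail_eq (hq0 : 0 < q) (c : ℝ) (N : ℕ) :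
    (fun k : ℕ ↦ 1 - c * q ^ (k + N)) = (fun k : ℕ ↦ 1 - (c * q ^ N) * q ^ k) := by
  funext k; rw [pow_add]; ring

private lemma tprod_pos_aux (hq0 : 0 < q) (hq1 : q < 1) {d : ℝ} (hd0 : 0 ≤ d) (hd1 : d < 1) :
    0 < ∏' k : ℕ, (1 - d * q ^ k) := by
  obtain ⟨N, hN⟩ : ∃ N : ℕ, |d| * q ^ N ≤ 1/2 := by
    have h := ((tendsto_pow_atTop_nhds_zero_of_lt_one hq0.le hq1).const_mul |d|)
    rw [mul_zero] at h
    exact (h.eventually_lt_const (by norm_num : (0:ℝ) < 1/2)).exists.imp fun N h => h.le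
  have hd' : |d * q ^ N| ≤ 1/2 := by
    rwa [abs_mul, abs_of_nonneg (pow_nonneg hq0.le N)]
  have htail : Multipliable fun k : ℕ ↦ 1 - d * q ^ (k + N) := by
    rw [tprod_tail_eq hq0 d N]
    exact multipliable_aux hq0 hq1 _
  rw [← Multipliable.prod_mul_tprod_nat_mul' htail]
  apply mul_pos
  · apply Finset.prod_pos
    intro i _
    have : d * q ^ i ≤ d * 1 := mul_le_mul_of_nonneg_left (pow_le_one₀ hq0.le hq1.le) hd0
    nlinarith
  · have hpos : ∀ (_ : Unit) (k : ℕ), 0 < 1 - (d * q ^ N) * q ^ k := by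
      intro _ k
      have h1 : (d * q ^ N) * q ^ k ≤ |d * q ^ N| * q ^ k :=
        mul_le_mul_of_nonneg_right (le_abs_self _) (pow_nonneg hq0.le k)
      have h2 : |d * q ^ N| * q ^ k ≤ 1/2 * 1 :=
        mul_le_mul hd' (pow_le_one₀ hq0.le hq1.le) (pow_nonneg hq0.le k) (by norm_num)
      nlinarith
    have hsum : ∀ (_ : Unit), Summable fun k : ℕ ↦ Real.log (1 - (d * q ^ N) * q ^ k) :=
      fun _ => summable_log_aux hq0 hq1 hd'
    have heq := Real.rexp_tsum_eq_tprod (hpos ()) (hsum ())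
    have heq2 := heq
    rw [tprod_congr (fun k => by rw [pow_add]; ring :
      ∀ k : ℕ, 1 - d * q ^ (k + N) = 1 - (d * q ^ N) * q ^ k)]
    rw [← heq2]
    exact Real.exp_pos _

private lemma tprod_sq_aux {f : ℕ → ℝ} (hf : Multipliable f) :
    (∏' k : ℕ, f k) ^ 2 = ∏' k : ℕ, (f k) ^ 2 := by
  rw [sq, ← Multipliable.tprod_mul hf hf]
  exact tprod_congr fun k => (sq (f k)).symm


private lemma prod_sq_eval (n : ℕ) (z : ℝ) (q : ℝ) :
    ∏ i ∈ Finset.range (n+1), (z * q ^ i) ^ 2 = (z ^ 2) ^ (n+1) * (q ^ ((n+1)*n)) := by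
  rw [Finset.prod_pow, Finset.prod_mul_distrib, Finset.prod_const, Finset.card_range,
    Finset.prod_pow_eq_pow_sum, mul_pow, ← pow_mul, ← pow_mul q]
  congr 1
  · rw [← pow_mul, Nat.mul_comm, pow_mul]
  · congr 1
    have := Finset.sum_range_id_mul_two (n+1)
    simpa using this

private lemma pow_trick (hq0 : 0 < q) {y : ℝ} (n : ℕ) (hy1 : 1 ≤ y * q ^ n) :
    (1/q) ^ ((n+1)*n) ≤ (y ^ 2) ^ (n+1) * q ^ ((n+1)*n) := by
  have hqn : 0 < q ^ n := pow_pos hq0 n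
  have hQ : 0 < q ^ ((n+1)*n) := pow_pos hq0 _
  have h1 : 1 ≤ (y * q ^ n) ^ (2*(n+1)) := by
    have := pow_le_pow_left₀ (by norm_num : (0:ℝ) ≤ 1) hy1 (2*(n+1))
    rwa [one_pow] at this
  have heq : (y * q ^ n) ^ (2*(n+1)) = (y ^ 2) ^ (n+1) * (q ^ ((n+1)*n)) ^ 2 := by
    rw [mul_pow, ← pow_mul, ← pow_mul, ← pow_mul]
    ring_nf
  rw [heq] at h1
  rw [one_div, inv_pow]
  rw [inv_le_iff_one_le_mul₀ hQ]
  calc (1:ℝ) ≤ (y ^ 2) ^ (n+1) * (q ^ ((n+1)*n)) ^ 2 := h1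
    _ = (y ^ 2) ^ (n+1) * q ^ ((n+1)*n) * q ^ ((n+1)*n) := by ring

private lemma tprod_le_tprod_nonneg {f g : ℕ → ℝ} (h0 : ∀ i, 0 ≤ f i) (h : ∀ i, f i ≤ g i)
    (hf : Multipliable f) (hg : Multipliable g) : ∏' i, f i ≤ ∏' i, g i :=
  le_of_tendsto_of_tendsto' hf.hasProd hg.hasProd
    (fun s => Finset.prod_le_prod (fun i _ => h0 i) (fun i _ => h i))

private lemma good_bound (hq0 : 0 < q) (hq1 : q < 1) {t y : ℝ} (ht : 1 < t) (hy : t ≤ y)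
    (hgood : ∀ k : ℕ, y * q ^ k ≤ 1 / t ∨ t ≤ y * q ^ k) :
    ∃ n : ℕ, y * q ^ (n + 1) ≤ 1 ∧
      (∏' k : ℕ, (1 - 1 / t * q ^ k)) ^ 2 * ((1 - 1 / t) ^ 2) ^ (n + 1) * (1 / q) ^ ((n + 1) * n)
        ≤ (∏' k : ℕ, (1 - y * q ^ k)) ^ 2 := by
  have ht0 : (0:ℝ) < t := by linarith
  have hy0 : (0:ℝ) < y := by linarith
  have h1t : 1 / t < 1 := by rw [div_lt_one ht0]; exact ht
  have h1t0 : 0 < 1 / t := by positivity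
  -- find n
  have hex : ∃ k : ℕ, y * q ^ k < t := by
    have h := (tendsto_pow_atTop_nhds_zero_of_lt_one hq0.le hq1).const_mul y
    rw [mul_zero] at h
    exact (h.eventually_lt_const ht0).exists
  have hfind := Nat.find_spec hex
  have hpos0 : 0 < Nat.find hex := by
    rcases Nat.eq_zero_or_pos (Nat.find hex) with h | h
    · exfalso; rw [h] at hfind; simp at hfind; linarith
    · exact h
  obtain ⟨n, hn⟩ : ∃ n, Nat.find hex = n + 1 := ⟨Nat.find hex - 1, by omega⟩
  have hbig : ∀ k ≤ n, t ≤ y * q ^ k := by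
    intro k hk
    have := Nat.find_min hex (by omega : k < Nat.find hex)
    linarith [not_lt.mp this]
  have hsmall' : y * q ^ (n+1) < t := by rw [← hn]; exact hfind
  have hsmall : y * q ^ (n+1) ≤ 1 / t := by
    rcases hgood (n+1) with h | h
    · exact h
    · linarith
  refine ⟨n, le_trans hsmall h1t.le, ?_⟩
  -- multipliability
  have hMy : Multipliable fun k : ℕ ↦ 1 - y * q ^ k := multipliable_aux hq0 hq1 y
  have hMt : Multipliable fun k : ℕ ↦ 1 - 1 / t * q ^ k := multipliable_aux hq0 hq1 _
  have hMysq : Multipliable fun k : ℕ ↦ (1 - y * q ^ k) ^ 2 :=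
    (hMy.mul hMy).congr fun k => (sq _).symm
  have hMtsq : Multipliable fun k : ℕ ↦ (1 - 1 / t * q ^ k) ^ 2 :=
    (hMt.mul hMt).congr fun k => (sq _).symm
  have htaileq : ∀ k : ℕ, 1 - y * q ^ (k + (n+1)) = 1 - (y * q ^ (n+1)) * q ^ k := by
    intro k; rw [pow_add]; ring
  have hMtail : Multipliable fun k : ℕ ↦ 1 - y * q ^ (k + (n+1)) :=
    (multipliable_aux hq0 hq1 (y * q ^ (n+1))).congr fun k => (htaileq k).symm
  have hMtailsq : Multipliable fun k : ℕ ↦ (1 - y * q ^ (k + (n+1))) ^ 2 :=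
    (hMtail.mul hMtail).congr fun k => (sq _).symm
  -- split
  rw [tprod_sq_aux hMy, ← Multipliable.prod_mul_tprod_nat_mul' (f := fun i : ℕ => (1 - y * q ^ i) ^ 2) (k := n+1) hMtailsq]
  -- tail bound
  have htermbd : ∀ k : ℕ, (1 - 1 / t * q ^ k) ^ 2 ≤ (1 - y * q ^ (k + (n+1))) ^ 2 := by
    intro k
    have hqk0 : (0:ℝ) ≤ q ^ k := pow_nonneg hq0.le k
    have hqk1 : q ^ k ≤ 1 := pow_le_one₀ hq0.le hq1.le
    have h1 : y * q ^ (k + (n+1)) ≤ 1 / t * q ^ k := by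
      have he : y * q ^ (k + (n+1)) = q ^ k * (y * q ^ (n+1)) := by rw [pow_add]; ring
      have he2 : 1 / t * q ^ k = q ^ k * (1/t) := by ring
      rw [he, he2]
      exact mul_le_mul_of_nonneg_left hsmall hqk0
    have h2 : 0 ≤ 1 - 1 / t * q ^ k := by nlinarith
    have h3 : 1 - 1 / t * q ^ k ≤ 1 - y * q ^ (k + (n+1)) := by linarith
    exact pow_le_pow_left₀ h2 h3 2
  have htail : (∏' k : ℕ, (1 - 1 / t * q ^ k)) ^ 2 ≤ ∏' k : ℕ, (1 - y * q ^ (k + (n+1))) ^ 2 := by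
    rw [tprod_sq_aux hMt]
    exact tprod_le_tprod_nonneg (fun k => sq_nonneg _) htermbd hMtsq hMtailsq
  -- finite product bound
  have hfinbd : ∏ i ∈ Finset.range (n+1), (((1 - 1/t) * y) * q ^ i) ^ 2
      ≤ ∏ i ∈ Finset.range (n+1), (1 - y * q ^ i) ^ 2 := by
    apply Finset.prod_le_prod
    · intro i _; positivity
    · intro i hi
      have hin : i ≤ n := by
        have := Finset.mem_range.mp hi; omega
      have hbi := hbig i hin
      have hterm : (0:ℝ) ≤ ((1 - 1/t) * y) * q ^ i := by
        have : (0:ℝ) ≤ 1 - 1/t := by linarith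
        positivity
      have hle : ((1 - 1/t) * y) * q ^ i ≤ y * q ^ i - 1 := by
        have hyqi : 0 < y * q ^ i := by positivity
        have h4 : 1 ≤ y * q ^ i / t := by rw [le_div_iff₀ ht0]; linarith
        have h5 : y * q ^ i / t = 1/t * (y * q ^ i) := by ring
        nlinarith
      have heqsq : (1 - y * q ^ i) ^ 2 = (y * q ^ i - 1) ^ 2 := by ring
      rw [heqsq]
      exact pow_le_pow_left₀ hterm hle 2
  rw [prod_sq_eval] at hfinbd
  -- assemble
  have hC2 : (0:ℝ) ≤ (∏' k : ℕ, (1 - 1 / t * q ^ k)) ^ 2 := sq_nonneg _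
  have hw : (0:ℝ) ≤ ((1 - 1/t) ^ 2) ^ (n+1) := by positivity
  have hylow : 1 ≤ y * q ^ n := by
    have := hbig n le_rfl; linarith
  have hpt := pow_trick hq0 n hylow
  -- ((1-1/t)*y)^2)^(n+1) * q^((n+1)*n) ≥ ((1-1/t)^2)^(n+1) * (1/q)^((n+1)*n)
  have hkey : ((1 - 1/t) ^ 2) ^ (n+1) * (1/q) ^ ((n+1)*n)
      ≤ (((1 - 1/t) * y) ^ 2) ^ (n+1) * q ^ ((n+1)*n) := by
    have h6 : (((1 - 1/t) * y) ^ 2) ^ (n+1) = ((1 - 1/t) ^ 2) ^ (n+1) * ((y ^ 2) ^ (n+1)) := by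
      rw [mul_pow, mul_pow]
    rw [h6, mul_assoc]
    exact mul_le_mul_of_nonneg_left hpt hw
  calc (∏' k : ℕ, (1 - 1 / t * q ^ k)) ^ 2 * ((1 - 1/t) ^ 2) ^ (n+1) * (1/q) ^ ((n+1)*n)
      = (((1 - 1/t) ^ 2) ^ (n+1) * (1/q) ^ ((n+1)*n)) * (∏' k : ℕ, (1 - 1 / t * q ^ k)) ^ 2 := by
        ring
    _ ≤ ((((1 - 1/t) * y) ^ 2) ^ (n+1) * q ^ ((n+1)*n)) * (∏' k : ℕ, (1 - y * q ^ (k + (n+1))) ^ 2) := by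
        apply mul_le_mul hkey htail hC2
        positivity
    _ ≤ (∏ i ∈ Finset.range (n+1), (1 - y * q ^ i) ^ 2) * ∏' k : ℕ, (1 - y * q ^ (k + (n+1))) ^ 2 := by
        apply mul_le_mul_of_nonneg_right hfinbd
        have h7 : ∀ k : ℕ, (0:ℝ) ≤ (1 - y * q ^ (k + (n+1))) ^ 2 := fun k => sq_nonneg _
        calc (0:ℝ) ≤ (∏' k : ℕ, (1 - 1 / t * q ^ k)) ^ 2 := hC2
          _ ≤ _ := htail

private lemma neg_bound (hq0 : 0 < q) (hq1 : q < 1) {y : ℝ} (hy : 1 ≤ y) :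
    ∃ n : ℕ, y * q ^ (n + 1) ≤ 1 ∧
      (1 / q) ^ ((n + 1) * n) ≤ (∏' k : ℕ, (1 + y * q ^ k)) ^ 2 := by
  have hy0 : (0:ℝ) < y := by linarith
  have hex : ∃ k : ℕ, y * q ^ k < 1 := by
    have h := (tendsto_pow_atTop_nhds_zero_of_lt_one hq0.le hq1).const_mul y
    rw [mul_zero] at h
    exact (h.eventually_lt_const one_pos).exists
  have hfind := Nat.find_spec hex
  have hpos0 : 0 < Nat.find hex := by
    rcases Nat.eq_zero_or_pos (Nat.find hex) with h | h
    · exfalso; rw [h] at hfind; simp at hfind; linarith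
    · exact h
  obtain ⟨n, hn⟩ : ∃ n, Nat.find hex = n + 1 := ⟨Nat.find hex - 1, by omega⟩
  have hbig : ∀ k ≤ n, 1 ≤ y * q ^ k := by
    intro k hk
    have := Nat.find_min hex (by omega : k < Nat.find hex)
    linarith [not_lt.mp this]
  have hsmall : y * q ^ (n+1) < 1 := by rw [← hn]; exact hfind
  refine ⟨n, hsmall.le, ?_⟩
  have heqf : ∀ k : ℕ, 1 + y * q ^ k = 1 - (-y) * q ^ k := fun k => by ring
  have hMy : Multipliable fun k : ℕ ↦ 1 + y * q ^ k :=
    (multipliable_aux hq0 hq1 (-y)).congr fun k => (heqf k).symm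
  have htaileq : ∀ k : ℕ, 1 + y * q ^ (k + (n+1)) = 1 - (-(y * q ^ (n+1))) * q ^ k := by
    intro k; rw [pow_add]; ring
  have hMtail : Multipliable fun k : ℕ ↦ 1 + y * q ^ (k + (n+1)) :=
    (multipliable_aux hq0 hq1 (-(y * q ^ (n+1)))).congr fun k => (htaileq k).symm
  have hMtailsq : Multipliable fun k : ℕ ↦ (1 + y * q ^ (k + (n+1))) ^ 2 :=
    (hMtail.mul hMtail).congr fun k => (sq _).symm
  rw [tprod_sq_aux hMy, ← Multipliable.prod_mul_tprod_nat_mul' (f := fun i : ℕ => (1 + y * q ^ i) ^ 2) (k := n+1) hMtailsq]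
  have htail : (1:ℝ) ≤ ∏' k : ℕ, (1 + y * q ^ (k + (n+1))) ^ 2 := by
    have := tprod_le_tprod_nonneg (f := fun _ : ℕ => (1:ℝ)) (fun _ => one_pos.le)
      (fun k => by
        have hu : (0:ℝ) ≤ y * q ^ (k + (n+1)) := by positivity
        show (1:ℝ) ≤ (1 + y * q ^ (k + (n+1))) ^ 2
        nlinarith [sq_nonneg (y * q ^ (k+(n+1)))] )
      multipliable_one hMtailsq
    simpa using this
  have hfinbd : ∏ i ∈ Finset.range (n+1), (y * q ^ i) ^ 2
      ≤ ∏ i ∈ Finset.range (n+1), (1 + y * q ^ i) ^ 2 := by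
    apply Finset.prod_le_prod
    · intro i _; positivity
    · intro i _
      have : (0:ℝ) ≤ y * q ^ i := by positivity
      apply pow_le_pow_left₀ this (by linarith) 2
  rw [prod_sq_eval] at hfinbd
  have hylow : 1 ≤ y * q ^ n := hbig n le_rfl
  have hpt := pow_trick hq0 n hylow
  calc (1/q) ^ ((n+1)*n) ≤ (y ^ 2) ^ (n+1) * q ^ ((n+1)*n) := hpt
    _ = ((y ^ 2) ^ (n+1) * q ^ ((n+1)*n)) * 1 := by ring
    _ ≤ (∏ i ∈ Finset.range (n+1), (1 + y * q ^ i) ^ 2) * ∏' k : ℕ, (1 + y * q ^ (k + (n+1))) ^ 2 := by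
        apply mul_le_mul hfinbd htail one_pos.le
        positivity

private lemma seq_tendsto (hq0 : 0 < q) (hq1 : q < 1) {K u A : ℝ}
    (hK : 0 < K) (hu : 0 < u) (hA : 0 < A) (m : ℕ) :
    Tendsto (fun n : ℕ ↦ K * u ^ (n+1) * (1/q) ^ ((n+1)*n) / (A * (1/q) ^ (n+1)) ^ m)
      atTop atTop := by
  have hq1' : (1:ℝ) < 1/q := (one_lt_div hq0).mpr hq1
  have hqm : (0:ℝ) < q ^ m := pow_pos hq0 m
  set K' := K * u * q ^ m / A ^ m with hK'
  have hK'0 : 0 < K' := by positivity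
  have hrw : ∀ n : ℕ, K * u ^ (n+1) * (1/q) ^ ((n+1)*n) / (A * (1/q) ^ (n+1)) ^ m
      = K' * (u * q ^ m * (1/q) ^ (n+1)) ^ n := by
    intro n
    rw [hK']
    have hqne : q ≠ 0 := hq0.ne'
    have hAne : A ≠ 0 := hA.ne'
    simp only [one_div, mul_pow, inv_pow, ← pow_mul]
    field_simp
    ring
  have hmono : Tendsto (fun n : ℕ ↦ u * q ^ m * (1/q) ^ (n+1)) atTop atTop := by
    apply Tendsto.const_mul_atTop (by positivity : (0:ℝ) < u * q ^ m)
    exact (tendsto_pow_atTop_atTop_of_one_lt hq1').comp (tendsto_add_atTop_nat 1)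
  have h2 : Tendsto (fun n : ℕ ↦ K' * 2 ^ n) atTop atTop :=
    Tendsto.const_mul_atTop hK'0 (tendsto_pow_atTop_atTop_of_one_lt one_lt_two)
  apply tendsto_atTop_mono' atTop _ h2
  filter_upwards [hmono.eventually_ge_atTop 2] with n hn
  rw [hrw n]
  have : (2:ℝ) ^ n ≤ (u * q ^ m * (1/q) ^ (n+1)) ^ n :=
    pow_le_pow_left₀ (by norm_num) hn n
  exact mul_le_mul_of_nonneg_left this hK'0.le

end PhiHelpers

set_option maxHeartbeats 4000000 in
theorem phi_superpolynomial_growth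
    (q a : ℝ) (hq0 : 0 < q) (hq1 : q < 1) (ha : 1 < a) (haq : a < 1 / q)
    (m : ℕ) :
    Tendsto (fun x : ℝ =>
        ((∏' k : ℕ, (1 - x * q ^ k)) ^ 2 + (∏' k : ℕ, (1 - (x / a) * q ^ k)) ^ 2)
          / |x| ^ m)
      (cocompact ℝ) atTop := by
  have ha0 : (0:ℝ) < a := by linarith
  have hq1' : (1:ℝ) < 1/q := (one_lt_div hq0).mpr hq1
  have haq' : a * q < 1 := by
    calc a * q < (1/q) * q := by exact mul_lt_mul_of_pos_right haq hq0
      _ = 1 := by field_simp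
  -- the window parameter t
  set s := min a (1/(a*q)) with hs
  have hs1 : 1 < s := by
    apply lt_min ha
    rw [lt_div_iff₀ (by positivity)]
    linarith
  set t := Real.sqrt s with htdef
  have hs0 : (0:ℝ) ≤ s := by linarith
  have ht : 1 < t := by
    rw [htdef]
    rw [show (1:ℝ) = Real.sqrt 1 from (Real.sqrt_one).symm]
    exact Real.sqrt_lt_sqrt one_pos.le hs1
  have ht0 : (0:ℝ) < t := by linarith
  have ht2 : t ^ 2 = s := Real.sq_sqrt hs0
  have hta : t ^ 2 ≤ a := by rw [ht2]; exact min_le_left _ _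
  have htaq : t ^ 2 ≤ 1/(a*q) := by rw [ht2]; exact min_le_right _ _
  have h1t : 1 / t < 1 := by rw [div_lt_one ht0]; exact ht
  have h1t0 : 0 < 1 / t := by positivity
  -- constants
  have hC : 0 < ∏' k : ℕ, (1 - 1 / t * q ^ k) := tprod_pos_aux hq0 hq1 h1t0.le h1t
  set C2 : ℝ := (∏' k : ℕ, (1 - 1 / t * q ^ k)) ^ 2 with hC2def
  have hC2 : 0 < C2 := by positivity
  set w : ℝ := (1 - 1/t) ^ 2 with hwdef
  have hw : 0 < w := by
    have : 0 < 1 - 1/t := by linarith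
    positivity
  rw [cocompact_eq_atBot_atTop, tendsto_sup]
  constructor
  · -- atBot : x → -∞
    rw [tendsto_atTop]
    intro b
    have hseq := seq_tendsto hq0 hq1 (K := 1) (u := 1) (A := a) one_pos one_pos ha0 m
    obtain ⟨N, hN⟩ := (hseq.eventually_ge_atTop b).exists_forall_of_atTop
    rw [eventually_atBot]
    refine ⟨-(a * (1/q) ^ (N+1)), fun x hx => ?_⟩
    have hXpos : (1:ℝ) ≤ a * (1/q) ^ (N+1) := by
      have h1 : (1:ℝ) ≤ (1/q) ^ (N+1) := one_le_pow₀ hq1'.le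
      nlinarith
    set y := -x with hydef
    have hy1 : a * (1/q) ^ (N+1) ≤ y := by rw [hydef]; linarith
    have hy : 1 ≤ y := le_trans hXpos hy1
    have hy0 : 0 < y := by linarith
    obtain ⟨n, hn1, hn2⟩ := neg_bound hq0 hq1 hy
    -- rewrite first product
    have hprodeq : (∏' k : ℕ, (1 - x * q ^ k)) = ∏' k : ℕ, (1 + y * q ^ k) :=
      tprod_congr fun k => by rw [hydef]; ring
    -- n ≥ N
    have hyub : y ≤ (1/q) ^ (n+1) := by
      have hqn1 : (0:ℝ) < q ^ (n+1) := pow_pos hq0 _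
      rw [div_pow, one_pow]
      exact (le_div_iff₀ hqn1).mpr (by linarith)
    have hnN : N ≤ n := by
      have h3 : (1/q) ^ (N+1) ≤ (1/q) ^ (n+1) := by
        calc (1/q) ^ (N+1) ≤ a * (1/q) ^ (N+1) := by nlinarith [pow_pos (by positivity : (0:ℝ) < 1/q) (N+1)]
          _ ≤ y := hy1
          _ ≤ (1/q) ^ (n+1) := hyub
      have := (pow_le_pow_iff_right₀ hq1').mp h3
      omega
    have hbB := hN n hnN
    -- denominator bound
    have hxabs : |x| = y := by rw [hydef, abs_of_neg (by linarith : x < 0)]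
    have hden : |x| ^ m ≤ (a * (1/q) ^ (n+1)) ^ m := by
      apply pow_le_pow_left₀ (abs_nonneg x)
      rw [hxabs]
      calc y ≤ (1/q) ^ (n+1) := hyub
        _ ≤ a * (1/q) ^ (n+1) := by nlinarith [pow_pos (by positivity : (0:ℝ) < 1/q) (n+1)]
    have hdenpos : 0 < |x| ^ m := by
      apply pow_pos; rw [hxabs]; exact hy0
    -- numerator bound
    have hnum : (1/q) ^ ((n+1)*n) ≤
        (∏' k : ℕ, (1 - x * q ^ k)) ^ 2 + (∏' k : ℕ, (1 - (x / a) * q ^ k)) ^ 2 := by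
      rw [hprodeq]
      nlinarith [sq_nonneg (∏' k : ℕ, (1 - (x / a) * q ^ k))]
    calc b ≤ 1 * 1 ^ (n+1) * (1/q) ^ ((n+1)*n) / (a * (1/q) ^ (n+1)) ^ m := hbB
      _ = (1/q) ^ ((n+1)*n) / (a * (1/q) ^ (n+1)) ^ m := by ring_nf
      _ ≤ (1/q) ^ ((n+1)*n) / |x| ^ m := by
          apply div_le_div_of_nonneg_left (by positivity) hdenpos hden
      _ ≤ _ := by
          exact div_le_div_of_nonneg_right hnum hdenpos.le
  · -- atTop : x → +∞
    rw [tendsto_atTop]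
    intro b
    have hseq := seq_tendsto hq0 hq1 (K := C2) (u := w) (A := a) hC2 hw ha0 m
    obtain ⟨N, hN⟩ := (hseq.eventually_ge_atTop b).exists_forall_of_atTop
    rw [eventually_atTop]
    refine ⟨max (a * (1/q) ^ (N+1)) (a * t), fun x hx => ?_⟩
    have hx1 : a * (1/q) ^ (N+1) ≤ x := le_trans (le_max_left _ _) hx
    have hx2 : a * t ≤ x := le_trans (le_max_right _ _) hx
    have hx0 : 0 < x := lt_of_lt_of_le (by positivity) hx2
    have hxa : t ≤ x / a := by rw [le_div_iff₀ ha0]; nlinarith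
    have hcover : (∀ k : ℕ, x * q ^ k ≤ 1 / t ∨ t ≤ x * q ^ k) ∨
        (∀ k : ℕ, (x/a) * q ^ k ≤ 1 / t ∨ t ≤ (x/a) * q ^ k) := by
      by_cases hgx : ∀ k : ℕ, x * q ^ k ≤ 1 / t ∨ t ≤ x * q ^ k
      · exact Or.inl hgx
      · right
        push_neg at hgx
        obtain ⟨k, hk1, hk2⟩ := hgx
        intro j
        rcases lt_or_ge j k with hjk | hjk
        · right
          have he : x * q ^ j * q ^ (k - j) = x * q ^ k := by
            rw [mul_assoc, ← pow_add]; congr 2; omega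
          have hq_le : q ^ (k - j) ≤ q := by
            calc q ^ (k-j) ≤ q ^ 1 := pow_le_pow_of_le_one hq0.le hq1.le (by omega)
              _ = q := pow_one q
          have hxj0 : 0 < x * q ^ j := by positivity
          have h6 : x * q ^ k ≤ (x * q ^ j) * q := by
            rw [← he]; exact mul_le_mul_of_nonneg_left hq_le hxj0.le
          have h7 : 1 < (x * q ^ j) * q * t := by
            rw [div_lt_iff₀ ht0] at hk1
            nlinarith
          have h4 : t * t * (a * q) ≤ 1 := by
            have h5 := htaq
            rw [le_div_iff₀ (by positivity : (0:ℝ) < a * q)] at h5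
            nlinarith
          rw [div_mul_eq_mul_div, le_div_iff₀ ha0]
          nlinarith [mul_pos hq0 ht0]
        · left
          have he : x * q ^ j = x * q ^ k * q ^ (j - k) := by
            rw [mul_assoc, ← pow_add]; congr 2; omega
          have hle1 : q ^ (j-k) ≤ 1 := pow_le_one₀ hq0.le hq1.le
          have h8 : x * q ^ j ≤ x * q ^ k := by
            rw [he]; nlinarith [mul_pos hx0 (pow_pos hq0 k)]
          rw [div_mul_eq_mul_div, div_le_div_iff₀ ha0 ht0]
          nlinarith
    obtain ⟨y, hyx, hyy, hgood, hprod_ge⟩ :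
        ∃ y : ℝ, x ≤ a * y ∧ t ≤ y ∧ (∀ k : ℕ, y * q ^ k ≤ 1/t ∨ t ≤ y * q ^ k) ∧
          ((∏' k : ℕ, (1 - y * q ^ k)) ^ 2 ≤
            (∏' k : ℕ, (1 - x * q ^ k)) ^ 2 + (∏' k : ℕ, (1 - (x/a) * q ^ k)) ^ 2) := by
      rcases hcover with h | h
      · refine ⟨x, by nlinarith, ?_, h, ?_⟩
        · calc t ≤ x / a := hxa
            _ ≤ x := by rw [div_le_iff₀ ha0]; nlinarith
        · nlinarith [sq_nonneg (∏' k : ℕ, (1 - (x/a) * q ^ k))]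
      · refine ⟨x/a, le_of_eq (by field_simp), hxa, h, ?_⟩
        nlinarith [sq_nonneg (∏' k : ℕ, (1 - x * q ^ k))]
    obtain ⟨n, hn1, hn2⟩ := good_bound hq0 hq1 ht hyy hgood
    have hy0 : 0 < y := by linarith
    have hyub : y ≤ (1/q) ^ (n+1) := by
      have hqn1 : (0:ℝ) < q ^ (n+1) := pow_pos hq0 _
      rw [div_pow, one_pow]
      exact (le_div_iff₀ hqn1).mpr (by linarith)
    have hnN : N ≤ n := by
      have h5 : a * (1/q) ^ (N+1) ≤ a * (1/q) ^ (n+1) :=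
        le_trans hx1 (le_trans hyx (mul_le_mul_of_nonneg_left hyub ha0.le))
      have h3 : (1/q) ^ (N+1) ≤ (1/q) ^ (n+1) := le_of_mul_le_mul_left h5 ha0
      have := (pow_le_pow_iff_right₀ hq1').mp h3
      omega
    have hbB := hN n hnN
    have hxabs : |x| = x := abs_of_pos hx0
    have hden : |x| ^ m ≤ (a * (1/q) ^ (n+1)) ^ m := by
      apply pow_le_pow_left₀ (abs_nonneg x)
      rw [hxabs]
      calc x ≤ a * y := hyx
        _ ≤ a * (1/q) ^ (n+1) := mul_le_mul_of_nonneg_left hyub ha0.le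
    have hdenpos : 0 < |x| ^ m := by
      apply pow_pos; rw [hxabs]; exact hx0
    have hnum : C2 * w ^ (n+1) * (1/q) ^ ((n+1)*n) ≤
        (∏' k : ℕ, (1 - x * q ^ k)) ^ 2 + (∏' k : ℕ, (1 - (x / a) * q ^ k)) ^ 2 :=
      le_trans hn2 hprod_ge
    calc b ≤ C2 * w ^ (n+1) * (1/q) ^ ((n+1)*n) / (a * (1/q) ^ (n+1)) ^ m := hbB
      _ ≤ C2 * w ^ (n+1) * (1/q) ^ ((n+1)*n) / |x| ^ m := by
          apply div_le_div_of_nonneg_left (by positivity) hdenpos hden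
      _ ≤ _ := div_le_div_of_nonneg_right hnum hdenpos.le
end

section
/- For 0 < q < 1 and a > 0 with aq < 1, the weights w_n = (aq;q)_∞ · aⁿ·q^{n²} / ((aq;q)_n·(q;q)_n) for n ≥ 0 are nonnegative and sum to 1, i.e. ∑_{n=0}^∞ aⁿq^{n²}/((aq;q)_n(q;q)_n) = 1/(aq;q)_∞. -/
open Finset

noncomputable def gb (q : ℝ) : ℕ → ℕ → ℝ
  | 0, 0 => 1
  | 0, _+1 => 0
  | _+1, 0 => 1
  | N+1, n+1 => q^(n+1) * gb q N (n+1) + gb q N n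

lemma gb_zero_right (q : ℝ) (N : ℕ) : gb q N 0 = 1 := by cases N <;> rfl

lemma gb_eq_zero (q : ℝ) : ∀ N n, N < n → gb q N n = 0 := by
  intro N
  induction N with
  | zero => intro n h; cases n with
    | zero => omega
    | succ m => rfl
  | succ N ih =>
    intro n h
    cases n with
    | zero => omega
    | succ m =>
      show q^(m+1) * gb q N (m+1) + gb q N m = 0
      rw [ih (m+1) (by omega), ih m (by omega)]; ring

lemma key (q : ℝ) : ∀ (N : ℕ), ∀ (a : ℝ),
    ∑ n ∈ range (N+1), a^n * q^(n^2) * gb q N n *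
      ∏ k ∈ range (N-n), (1 - a * q^(n+1) * q^k) = 1 := by
  intro N
  induction N with
  | zero => intro a; simp [gb]
  | succ N ih =>
    intro a
    set u : ℕ → ℝ := fun n =>
      a^n * q^(n^2) * (q^n * gb q N n) * ∏ k ∈ range (N+1-n), (1 - a * q^(n+1) * q^k) with hu
    set w : ℕ → ℝ := fun n =>
      a^n * q^(n^2) * (gb q (N+1) n - q^n * gb q N n) *
        ∏ k ∈ range (N+1-n), (1 - a * q^(n+1) * q^k) with hw
    have expand : ∀ n ∈ range (N+1+1),
        a^n * q^(n^2) * gb q (N+1) n * ∏ k ∈ range (N+1-n), (1 - a * q^(n+1) * q^k)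
          = u n + w n := by
      intro n _
      rw [hu, hw]; ring
    rw [Finset.sum_congr rfl expand, Finset.sum_add_distrib,
        Finset.sum_range_succ u (N+1), Finset.sum_range_succ' w (N+1)]
    have hu_last : u (N+1) = 0 := by
      rw [hu]; simp only; rw [gb_eq_zero q N (N+1) (by omega)]; ring
    have hw_zero : w 0 = 0 := by
      rw [hw]; simp only; rw [gb_zero_right, gb_zero_right]; ring
    rw [hu_last, hw_zero, add_zero, add_zero, ← Finset.sum_add_distrib]
    have step : ∀ n ∈ range (N+1), u n + w (n+1)
        = (a*q)^n * q^(n^2) * gb q N n * ∏ k ∈ range (N-n), (1 - (a*q) * q^(n+1) * q^k) := by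
      intro n hn
      have hn' : n ≤ N := Nat.lt_succ_iff.mp (Finset.mem_range.mp hn)
      have hgb : gb q (N+1) (n+1) - q^(n+1) * gb q N (n+1) = gb q N n := by
        show q^(n+1) * gb q N (n+1) + gb q N n - q^(n+1) * gb q N (n+1) = gb q N n
        ring
      rw [hu, hw]; simp only
      rw [hgb]
      have h1 : N + 1 - n = (N - n) + 1 := by omega
      have h1' : N + 1 - (n+1) = N - n := by omega
      rw [h1, h1', Finset.prod_range_succ']
      have h2 : ∀ k, (1 - a * q^(n+1) * q^(k+1)) = (1 - a * q^(n+1+1) * q^k) := by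
        intro k; ring_nf
      have h3 : ∀ k, (1 - (a*q) * q^(n+1) * q^k) = (1 - a * q^(n+1+1) * q^k) := by
        intro k; ring_nf
      simp only [h2, h3]
      generalize (∏ k ∈ range (N-n), (1 - a * q^(n+1+1) * q^k)) = X
      ring
    rw [Finset.sum_congr rfl step, ih (a*q)]

lemma gb_diag (q : ℝ) : ∀ N, gb q N N = 1 := by
  intro N
  induction N with
  | zero => rfl
  | succ N ih =>
    show q^(N+1) * gb q N (N+1) + gb q N N = 1
    rw [gb_eq_zero q N (N+1) (by omega), ih]; ring

lemma gb_mul (q : ℝ) : ∀ N n, n ≤ N →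
    gb q N n * ((∏ k ∈ range n, (1 - q*q^k)) * (∏ k ∈ range (N-n), (1 - q*q^k)))
      = ∏ k ∈ range N, (1 - q*q^k) := by
  intro N
  induction N with
  | zero =>
    intro n hn
    interval_cases n
    simp [gb_zero_right]
  | succ N ih =>
    intro n hn
    cases n with
    | zero => simp [gb_zero_right]
    | succ m =>
      rcases Nat.lt_or_ge m N with hm | hm
      · -- m + 1 ≤ N
        obtain ⟨b, rfl⟩ : ∃ b, N = m + 1 + b := ⟨N - (m+1), by omega⟩
        have IH1 := ih (m+1) (by omega)
        have IH2 := ih m (by omega)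
        rw [show m + 1 + b - (m+1) = b by omega] at IH1
        rw [show m + 1 + b - m = b + 1 by omega] at IH2
        show (q^(m+1) * gb q (m+1+b) (m+1) + gb q (m+1+b) m) * _ = _
        rw [show m + 1 + b + 1 - (m+1) = b + 1 by omega,
            Finset.prod_range_succ (fun k => (1 - q*q^k)) (m+1+b),
            Finset.prod_range_succ (fun k => (1 - q*q^k)) b,
            Finset.prod_range_succ (fun k => (1 - q*q^k)) m] at *
        linear_combination (q^(m+1)*(1-q*q^b)) * IH1 + (1-q*q^m) * IH2
      · -- m = N (diagonal)
        have hmN : m = N := by omega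
        subst hmN
        rw [gb_diag, show m + 1 - (m+1) = 0 by omega]
        simp

lemma gb_nonneg (q : ℝ) (hq : 0 ≤ q) : ∀ N n, 0 ≤ gb q N n := by
  intro N
  induction N with
  | zero => intro n; cases n with
    | zero => norm_num [gb]
    | succ m => norm_num [gb]
  | succ N ih =>
    intro n
    cases n with
    | zero => rw [gb_zero_right]; norm_num
    | succ m =>
      show 0 ≤ q^(m+1) * gb q N (m+1) + gb q N m
      have := ih (m+1); have := ih m
      positivity

lemma prod_split (c q : ℝ) (n m : ℕ) :
    ∏ k ∈ range (n+m), (1 - c*q*q^k)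
      = (∏ k ∈ range n, (1 - c*q*q^k)) * ∏ k ∈ range m, (1 - c*q^(n+1)*q^k) := by
  rw [Finset.prod_range_add]
  congr 1
  refine Finset.prod_congr rfl fun k _ => ?_
  rw [pow_add]; ring

lemma hasProd_one_sub (q c : ℝ) (hq0 : 0 ≤ q) (hq1 : q < 1) (hc0 : 0 ≤ c) (hc1 : c < 1) :
    ∃ L, 0 < L ∧ HasProd (fun k : ℕ => 1 - c * q^k) L := by
  have hfac : ∀ k : ℕ, 0 < 1 - c * q^k := by
    intro k
    have h1 : q^k ≤ 1 := pow_le_one₀ hq0 hq1.le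
    nlinarith [pow_nonneg hq0 k]
  have hlog : Summable (fun k : ℕ => -Real.log (1 - c * q^k)) := by
    apply Summable.of_nonneg_of_le
    · intro k
      rw [neg_nonneg]
      exact Real.log_nonpos (hfac k).le (by nlinarith [pow_nonneg hq0 k])
    · intro k
      show -Real.log (1 - c * q^k) ≤ (c/(1-c)) * q^k
      rw [← Real.log_inv]
      have h2 := Real.log_le_sub_one_of_pos (inv_pos.mpr (hfac k))
      have hqk1 : q^k ≤ 1 := pow_le_one₀ hq0 hq1.le
      have hd : 0 < 1 - c := by linarith
      have hd2 : 1 - c ≤ 1 - c * q^k := by nlinarith [pow_nonneg hq0 k]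
      have e1 : (1 - c*q^k)⁻¹ - 1 = (c*q^k) / (1 - c*q^k) := by
        rw [inv_eq_one_div, div_sub' (ne_of_gt (hfac k))]
        ring_nf
      have e2 : (c*q^k) / (1 - c*q^k) ≤ (c*q^k) / (1-c) := by
        gcongr
      have e3 : (c*q^k) / (1-c) = (c/(1-c)) * q^k := by ring
      linarith
    · exact (summable_geometric_of_lt_one hq0 hq1).mul_left _
  have hs : Summable (fun k : ℕ => Real.log (1 - c * q^k)) := by
    simpa using hlog.neg
  refine ⟨Real.exp (∑' k, Real.log (1 - c * q^k)), Real.exp_pos _, ?_⟩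
  have h := hs.hasSum.rexp
  have heq : (Real.exp ∘ fun k : ℕ => Real.log (1 - c * q^k)) = fun k : ℕ => 1 - c * q^k :=
    funext fun k => by simp [Real.exp_log (hfac k)]
  rwa [heq] at h

lemma prod_range_anti {f : ℕ → ℝ} (h0 : ∀ k, 0 ≤ f k) (h1 : ∀ k, f k ≤ 1) {n N : ℕ} (h : n ≤ N) :
    ∏ k ∈ range N, f k ≤ ∏ k ∈ range n, f k := by
  obtain ⟨m, rfl⟩ : ∃ m, N = n + m := ⟨N - n, by omega⟩
  rw [Finset.prod_range_add]
  exact mul_le_of_le_one_right (Finset.prod_nonneg fun k _ => h0 k)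
    (Finset.prod_le_one (fun k _ => h0 _) (fun k _ => h1 _))

theorem alSalamCarlitz_weights_sum_to_one
    (q a : ℝ) (hq0 : 0 < q) (hq1 : q < 1) (ha : 0 < a) (haq : a * q < 1) :
    (∀ n : ℕ, 0 ≤ (∏' k : ℕ, (1 - a * q * q ^ k)) *
        (a ^ n * q ^ (n ^ 2) /
          ((∏ k ∈ Finset.range n, (1 - a * q * q ^ k)) *
            (∏ k ∈ Finset.range n, (1 - q * q ^ k))))) ∧
    (∑' n : ℕ, a ^ n * q ^ (n ^ 2) /
        ((∏ k ∈ Finset.range n, (1 - a * q * q ^ k)) *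
          (∏ k ∈ Finset.range n, (1 - q * q ^ k)))) =
      (∏' k : ℕ, (1 - a * q * q ^ k))⁻¹ := by
  obtain ⟨LA, hLA, hA⟩ := hasProd_one_sub q (a*q) hq0.le hq1 (mul_pos ha hq0).le haq
  obtain ⟨LE, hLE, hE⟩ := hasProd_one_sub q q hq0.le hq1 hq0.le hq1
  -- basic facts about the factors
  have hqk1 : ∀ k : ℕ, q ^ k ≤ 1 := fun k => pow_le_one₀ hq0.le hq1.le
  have hqk0 : ∀ k : ℕ, 0 ≤ q ^ k := fun k => pow_nonneg hq0.le k
  have hfacA : ∀ k : ℕ, 0 < 1 - a*q*q^k := fun k => by nlinarith [hqk1 k, hqk0 k, mul_pos ha hq0]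
  have hfacE : ∀ k : ℕ, 0 < 1 - q*q^k := fun k => by nlinarith [hqk1 k, hqk0 k]
  have hfacA1 : ∀ k : ℕ, 1 - a*q*q^k ≤ 1 := fun k => by nlinarith [hqk0 k, mul_pos ha hq0]
  have hfacE1 : ∀ k : ℕ, 1 - q*q^k ≤ 1 := fun k => by nlinarith [hqk0 k]
  have hfacS : ∀ n k : ℕ, a * q^(n+1) * q^k = a*q*q^(n+k) := by
    intro n k
    rw [mul_assoc, ← pow_add, mul_assoc, ← pow_succ']
    congr 2
    omega
  have hfacS0 : ∀ n k : ℕ, 0 < 1 - a * q^(n+1) * q^k := fun n k => by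
    rw [hfacS]; exact hfacA _
  have hfacS1 : ∀ n k : ℕ, 1 - a * q^(n+1) * q^k ≤ 1 := fun n k => by
    rw [hfacS]; exact hfacA1 _
  set A : ℕ → ℝ := fun n => ∏ k ∈ range n, (1 - a*q*q^k) with hAdef
  set E : ℕ → ℝ := fun n => ∏ k ∈ range n, (1 - q*q^k) with hEdef
  have hApos : ∀ n, 0 < A n := fun n => Finset.prod_pos fun k _ => hfacA k
  have hEpos : ∀ n, 0 < E n := fun n => Finset.prod_pos fun k _ => hfacE k
  have hAle1 : ∀ n, A n ≤ 1 := fun n =>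
    Finset.prod_le_one (fun k _ => (hfacA k).le) (fun k _ => hfacA1 k)
  have hEle1 : ∀ n, E n ≤ 1 := fun n =>
    Finset.prod_le_one (fun k _ => (hfacE k).le) (fun k _ => hfacE1 k)
  have tendA : Filter.Tendsto A Filter.atTop (nhds LA) := hA.tendsto_prod_nat
  have tendE : Filter.Tendsto E Filter.atTop (nhds LE) := hE.tendsto_prod_nat
  have hALA : ∀ n, LA ≤ A n := by
    intro n
    refine le_of_tendsto tendA ?_
    filter_upwards [Filter.eventually_ge_atTop n] with N hN
    exact prod_range_anti (fun k => (hfacA k).le) hfacA1 hN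
  have hELE : ∀ n, LE ≤ E n := by
    intro n
    refine le_of_tendsto tendE ?_
    filter_upwards [Filter.eventually_ge_atTop n] with N hN
    exact prod_range_anti (fun k => (hfacE k).le) hfacE1 hN
  -- the approximating double sequence
    -- f N n
  set f : ℕ → ℕ → ℝ := fun N n =>
    if n ≤ N then a^n * q^(n^2) * gb q N n * ∏ k ∈ range (N-n), (1 - a * q^(n+1) * q^k)
    else 0 with hfdef
  have hf1 : ∀ N, (∑' n, f N n) = 1 := by
    intro N
    have h0 : ∀ n ∉ range (N+1), f N n = 0 := by
      intro n hn
      rw [hfdef]; simp only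
      rw [if_neg]
      intro h
      exact hn (Finset.mem_range.mpr (Nat.lt_succ_of_le h))
    have hpos : ∀ n ∈ range (N+1), f N n
        = a^n * q^(n^2) * gb q N n * ∏ k ∈ range (N-n), (1 - a * q^(n+1) * q^k) := by
      intro n hn
      rw [hfdef]; simp only
      rw [if_pos (Nat.lt_succ_iff.mp (Finset.mem_range.mp hn))]
    rw [tsum_eq_sum h0, Finset.sum_congr rfl hpos]
    exact key q N a
  -- gb and tail products in closed form
  have hgb_eq : ∀ N n, n ≤ N → gb q N n = E N / (E n * E (N-n)) := by
    intro N n hn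
    rw [eq_div_iff (ne_of_gt (mul_pos (hEpos n) (hEpos (N-n))))]
    exact gb_mul q N n hn
  have htail : ∀ N n, n ≤ N →
      (∏ k ∈ range (N-n), (1 - a * q^(n+1) * q^k)) = A N / A n := by
    intro N n hn
    rw [eq_div_iff (ne_of_gt (hApos n)), mul_comm]
    have := prod_split a q n (N-n)
    rw [show n + (N-n) = N by omega] at this
    exact this.symm
  -- pointwise limits
  have hptw : ∀ n : ℕ, Filter.Tendsto (fun N => f N n) Filter.atTop
      (nhds (LA * (a^n * q^(n^2) / (A n * E n)))) := by
    intro n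
    have heq : ∀ᶠ N in Filter.atTop,
        a^n * q^(n^2) * (E N / (E n * E (N-n))) * (A N / A n) = f N n := by
      filter_upwards [Filter.eventually_ge_atTop n] with N hN
      rw [hfdef]; simp only
      rw [if_pos hN, hgb_eq N n hN, htail N n hN]
    refine Filter.Tendsto.congr' heq ?_
    have l1 : Filter.Tendsto (fun N => E (N-n)) Filter.atTop (nhds LE) :=
      tendE.comp (Filter.tendsto_sub_atTop_nat n)
    have l2 : Filter.Tendsto (fun N => a^n * q^(n^2) * (E N / (E n * E (N-n))) * (A N / A n))
        Filter.atTop (nhds (a^n * q^(n^2) * (LE / (E n * LE)) * (LA / A n))) := by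
      refine Filter.Tendsto.mul (Filter.Tendsto.mul tendsto_const_nhds ?_) ?_
      · exact tendE.div (tendsto_const_nhds.mul l1) (ne_of_gt (mul_pos (hEpos n) hLE))
      · exact tendA.div_const _
    have hval : a^n * q^(n^2) * (LE / (E n * LE)) * (LA / A n)
        = LA * (a^n * q^(n^2) / (A n * E n)) := by
      field_simp [hLE.ne', (hEpos n).ne', (hApos n).ne']
    rwa [hval] at l2
  -- uniform bound
  have hb : ∀ N n, ‖f N n‖ ≤ (LE*LE)⁻¹ * (a*q)^n := by
    intro N n
    have hbnn : 0 ≤ (LE*LE)⁻¹ * (a*q)^n := by positivity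
    rw [hfdef]; simp only
    by_cases hn : n ≤ N
    · rw [if_pos hn]
      have hP0 : 0 ≤ ∏ k ∈ range (N-n), (1 - a * q^(n+1) * q^k) :=
        Finset.prod_nonneg fun k _ => (hfacS0 n k).le
      have hP1 : (∏ k ∈ range (N-n), (1 - a * q^(n+1) * q^k)) ≤ 1 :=
        Finset.prod_le_one (fun k _ => (hfacS0 n k).le) (fun k _ => hfacS1 n k)
      have hgbnn : 0 ≤ gb q N n := gb_nonneg q hq0.le N n
      have hterm0 : 0 ≤ a^n * q^(n^2) * gb q N n * ∏ k ∈ range (N-n), (1 - a * q^(n+1) * q^k) := by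
        have : 0 ≤ a^n * q^(n^2) := by positivity
        positivity
      rw [Real.norm_eq_abs, abs_of_nonneg hterm0]
      have hgb_le : gb q N n ≤ (LE*LE)⁻¹ := by
        rw [hgb_eq N n hn]
        have h1 : E N / (E n * E (N-n)) ≤ 1 / (E n * E (N-n)) := by
          gcongr
          · exact (mul_pos (hEpos n) (hEpos (N-n))).le
          · exact hEle1 N
        have h2 : 1 / (E n * E (N-n)) ≤ 1 / (LE * LE) :=
          one_div_le_one_div_of_le (mul_pos hLE hLE)
            (mul_le_mul (hELE n) (hELE (N-n)) hLE.le (hEpos n).le)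
        calc E N / (E n * E (N-n)) ≤ 1 / (E n * E (N-n)) := h1
          _ ≤ 1 / (LE*LE) := h2
          _ = (LE*LE)⁻¹ := one_div _
      have hpow : a^n * q^(n^2) ≤ (a*q)^n := by
        rw [mul_pow]
        have : q^(n^2) ≤ q^n :=
          pow_le_pow_of_le_one hq0.le hq1.le (Nat.le_self_pow (by norm_num) n)
        have han : 0 ≤ a^n := by positivity
        nlinarith
      calc a^n * q^(n^2) * gb q N n * ∏ k ∈ range (N-n), (1 - a * q^(n+1) * q^k)
          ≤ a^n * q^(n^2) * gb q N n * 1 := by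
            have : 0 ≤ a^n * q^(n^2) * gb q N n := by positivity
            nlinarith
        _ = a^n * q^(n^2) * gb q N n := by ring
        _ ≤ (a*q)^n * (LE*LE)⁻¹ := by
            have h3 : 0 ≤ a^n * q^(n^2) := by positivity
            have h4 : 0 ≤ (LE*LE)⁻¹ := by positivity
            nlinarith
        _ = (LE*LE)⁻¹ * (a*q)^n := by ring
    · rw [if_neg hn]
      simpa using hbnn
  -- dominated convergence
  have hbs : Summable (fun n : ℕ => (LE*LE)⁻¹ * (a*q)^n) :=
    (summable_geometric_of_lt_one (mul_pos ha hq0).le haq).mul_left _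
  have main := tendsto_tsum_of_dominated_convergence hbs hptw
    (Filter.Eventually.of_forall (fun N k => hb N k))
  have hfconst : (fun N => ∑' n, f N n) = fun _ => (1:ℝ) := funext hf1
  rw [hfconst] at main
  have hsum1 : (∑' n : ℕ, LA * (a^n * q^(n^2) / (A n * E n))) = 1 :=
    tendsto_nhds_unique main tendsto_const_nhds
  rw [tsum_mul_left] at hsum1
  have hS : (∑' n : ℕ, a^n * q^(n^2) / (A n * E n)) = LA⁻¹ := by
    have := congrArg (fun x => LA⁻¹ * x) hsum1
    simpa [← mul_assoc, inv_mul_cancel₀ (ne_of_gt hLA)] using this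
  constructor
  · intro n
    rw [hA.tprod_eq]
    exact mul_nonneg hLA.le (div_nonneg (by positivity) (mul_pos (hApos n) (hEpos n)).le)
  · rw [hA.tprod_eq]
    exact hS
end

section
/- Let hₙ, h₀ : ℝ → ℝ be continuous strictly positive functions (n ≥ 1) with hₙ → h₀ uniformly on compact subsets of ℝ, satisfying a uniform bound |log hₙ(x)| ≤ a + b·x² for all n ≥ 0 and x ∈ ℝ, and suppose that ∫ (a + bx²)/hₙ(x)·(1-φ(x)) dx → ∫ (a + bx²)/h₀(x)·(1-φ(x)) dx for every continuous compactly supported φ : ℝ → [0,1], and ∫_{|x|≥K}(a+bx²)/h₀(x) dx → 0 as K → ∞. Then ∫ log(hₙ(x))/hₙ(x) dx → ∫ log(h₀(x))/h₀(x) dx. -/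
open MeasureTheory Filter

theorem entropy_integral_convergence
    (h : ℕ → ℝ → ℝ) (h₀ : ℝ → ℝ)
    (hcont : ∀ n, Continuous (h n)) (h₀cont : Continuous h₀)
    (hpos : ∀ n x, 0 < h n x) (h₀pos : ∀ x, 0 < h₀ x)
    (hunif : ∀ K : Set ℝ, IsCompact K → TendstoUniformlyOn (fun n x => h n x) h₀ atTop K)
    (a b : ℝ) (ha : 0 < a) (hb : 0 < b)
    (hlog : ∀ n x, |Real.log (h n x)| ≤ a + b * x ^ 2)
    (h₀log : ∀ x, |Real.log (h₀ x)| ≤ a + b * x ^ 2)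
    (hint : ∀ n, Integrable (fun x : ℝ => (a + b * x ^ 2) / h n x))
    (h₀int : Integrable (fun x : ℝ => (a + b * x ^ 2) / h₀ x))
    (hweak : ∀ φ : ℝ → ℝ, Continuous φ → HasCompactSupport φ →
      (∀ x, φ x ∈ Set.Icc (0 : ℝ) 1) →
      Tendsto (fun n => ∫ x, (a + b * x ^ 2) / h n x * (1 - φ x)) atTop
        (nhds (∫ x, (a + b * x ^ 2) / h₀ x * (1 - φ x))))
    (htail : Tendsto (fun K : ℝ => ∫ x in {x : ℝ | K ≤ |x|}, (a + b * x ^ 2) / h₀ x)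
      atTop (nhds 0)) :
    Tendsto (fun n => ∫ x, Real.log (h n x) / h n x) atTop
      (nhds (∫ x, Real.log (h₀ x) / h₀ x)) := by
  -- Notation
  set F : ℕ → ℝ → ℝ := fun n x => Real.log (h n x) / h n x with hF
  set F₀ : ℝ → ℝ := fun x => Real.log (h₀ x) / h₀ x with hF₀
  have Fcont : ∀ n, Continuous (F n) := fun n =>
    ((hcont n).log fun x => (hpos n x).ne').div (hcont n) fun x => (hpos n x).ne'
  have F₀cont : Continuous F₀ :=
    (h₀cont.log fun x => (h₀pos x).ne').div h₀cont fun x => (h₀pos x).ne'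
  have gpos : ∀ x : ℝ, 0 < a + b * x ^ 2 := fun x => by positivity
  have Fbound : ∀ n x, |F n x| ≤ (a + b * x ^ 2) / h n x := by
    intro n x
    rw [hF, abs_div, abs_of_pos (hpos n x)]
    gcongr
    · exact (hpos n x).le
    · exact hlog n x
  have F₀bound : ∀ x, |F₀ x| ≤ (a + b * x ^ 2) / h₀ x := by
    intro x
    rw [hF₀, abs_div, abs_of_pos (h₀pos x)]
    gcongr
    · exact (h₀pos x).le
    · exact h₀log x
  have Fint : ∀ n, Integrable (F n) := fun n =>
    (hint n).mono' (Fcont n).aestronglyMeasurable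
      (Filter.Eventually.of_forall fun x => by rw [Real.norm_eq_abs]; exact Fbound n x)
  have F₀int : Integrable F₀ :=
    h₀int.mono' F₀cont.aestronglyMeasurable
      (Filter.Eventually.of_forall fun x => by rw [Real.norm_eq_abs]; exact F₀bound x)
  -- pointwise convergence of F n x
  have hptwise : ∀ x, Tendsto (fun n => h n x) atTop (nhds (h₀ x)) := fun x =>
    (hunif {x} isCompact_singleton).tendsto_at rfl
  have hFptwise : ∀ x, Tendsto (fun n => F n x) atTop (nhds (F₀ x)) := by
    intro x
    exact Tendsto.div
      (((Real.continuousAt_log (h₀pos x).ne').tendsto).comp (hptwise x))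
      (hptwise x) (h₀pos x).ne'
  rw [Metric.tendsto_atTop]
  intro ε hε
  -- choose K
  obtain ⟨K, hK0, hKtail⟩ :
      ∃ K : ℝ, 0 < K ∧ ∫ x in {x : ℝ | K ≤ |x|}, (a + b * x ^ 2) / h₀ x < ε / 8 := by
    have h1 := htail.eventually_lt_const (show (0:ℝ) < ε / 8 by positivity)
    exact ((eventually_gt_atTop (0:ℝ)).and h1).exists
  -- cutoff function
  set φ : ℝ → ℝ := fun x => max 0 (min 1 (K + 1 - |x|)) with hφdef
  have φcont : Continuous φ :=
    continuous_const.max (continuous_const.min (continuous_const.sub continuous_abs))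
  have φmem : ∀ x, φ x ∈ Set.Icc (0:ℝ) 1 := fun x =>
    ⟨le_max_left _ _, max_le zero_le_one (min_le_left _ _)⟩
  have φone : ∀ x : ℝ, |x| ≤ K → φ x = 1 := by
    intro x hx
    rw [hφdef]
    simp only
    rw [min_eq_left (by linarith), max_eq_right zero_le_one]
  have φzero : ∀ x : ℝ, K + 1 ≤ |x| → φ x = 0 := by
    intro x hx
    rw [hφdef]
    simp only
    rw [min_eq_right (by linarith), max_eq_left (by linarith)]
  have φsupp : HasCompactSupport φ := by
    apply HasCompactSupport.intro (isCompact_Icc (a := -(K+1)) (b := K+1))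
    intro x hx
    apply φzero
    simp only [Set.mem_Icc, not_and_or, not_le] at hx
    rcases hx with hx | hx
    · rw [abs_of_nonpos (by linarith)]; linarith
    · rw [abs_of_nonneg (by linarith)]; linarith
  -- integrabilities with cutoff
  have intφF : ∀ n, Integrable (fun x => φ x * F n x) := by
    intro n
    refine (Fint n).abs.mono' (φcont.mul (Fcont n)).aestronglyMeasurable
      (Filter.Eventually.of_forall fun x => ?_)
    rw [Real.norm_eq_abs, abs_mul, abs_of_nonneg (φmem x).1]
    calc φ x * |F n x| ≤ 1 * |F n x| := by gcongr; exact (φmem x).2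
    _ = |F n x| := one_mul _
  have intφF₀ : Integrable (fun x => φ x * F₀ x) := by
    refine F₀int.abs.mono' (φcont.mul F₀cont).aestronglyMeasurable
      (Filter.Eventually.of_forall fun x => ?_)
    rw [Real.norm_eq_abs, abs_mul, abs_of_nonneg (φmem x).1]
    calc φ x * |F₀ x| ≤ 1 * |F₀ x| := by gcongr; exact (φmem x).2
    _ = |F₀ x| := one_mul _
  have intg1φ : ∀ n, Integrable (fun x => (a + b * x ^ 2) / h n x * (1 - φ x)) := by
    intro n
    refine (hint n).mono'
      ((((continuous_const.add (continuous_const.mul (continuous_pow 2))).div (hcont n)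
        fun x => (hpos n x).ne')).mul (continuous_const.sub φcont)).aestronglyMeasurable
      (Filter.Eventually.of_forall fun x => ?_)
    rw [Real.norm_eq_abs, abs_mul, abs_of_pos (div_pos (gpos x) (hpos n x)),
      abs_of_nonneg (by linarith [(φmem x).2])]
    calc (a + b * x ^ 2) / h n x * (1 - φ x) ≤ (a + b * x ^ 2) / h n x * 1 := by
          gcongr
          · exact le_of_lt (div_pos (gpos x) (hpos n x))
          · linarith [(φmem x).1]
    _ = (a + b * x ^ 2) / h n x := mul_one _
  have intg1φ₀ : Integrable (fun x => (a + b * x ^ 2) / h₀ x * (1 - φ x)) := by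
    refine h₀int.mono'
      ((((continuous_const.add (continuous_const.mul (continuous_pow 2))).div h₀cont
        fun x => (h₀pos x).ne')).mul (continuous_const.sub φcont)).aestronglyMeasurable
      (Filter.Eventually.of_forall fun x => ?_)
    rw [Real.norm_eq_abs, abs_mul, abs_of_pos (div_pos (gpos x) (h₀pos x)),
      abs_of_nonneg (by linarith [(φmem x).2])]
    calc (a + b * x ^ 2) / h₀ x * (1 - φ x) ≤ (a + b * x ^ 2) / h₀ x * 1 := by
          gcongr
          · exact le_of_lt (div_pos (gpos x) (h₀pos x))
          · linarith [(φmem x).1]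
    _ = (a + b * x ^ 2) / h₀ x := mul_one _
  -- tail bound for limit
  have hL : (∫ x, (a + b * x ^ 2) / h₀ x * (1 - φ x)) < ε / 8 := by
    have hle : (∫ x, (a + b * x ^ 2) / h₀ x * (1 - φ x)) ≤
        ∫ x in {x : ℝ | K ≤ |x|}, (a + b * x ^ 2) / h₀ x := by
      rw [← integral_indicator ((isClosed_le continuous_const continuous_abs).measurableSet)]
      refine integral_mono intg1φ₀ (h₀int.indicator
        ((isClosed_le continuous_const continuous_abs).measurableSet)) fun x => ?_
      by_cases hx : x ∈ {x : ℝ | K ≤ |x|}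
      · rw [Set.indicator_of_mem hx]
        calc (a + b * x ^ 2) / h₀ x * (1 - φ x) ≤ (a + b * x ^ 2) / h₀ x * 1 := by
              gcongr
              · exact le_of_lt (div_pos (gpos x) (h₀pos x))
              · linarith [(φmem x).1]
        _ = _ := mul_one _
      · rw [Set.indicator_of_notMem hx, φone x (le_of_not_ge (by simpa using hx))]
        simp
    linarith
  -- tail bound eventually
  have hBev : ∀ᶠ n in atTop, (∫ x, (a + b * x ^ 2) / h n x * (1 - φ x)) < ε / 4 :=
    (hweak φ φcont φsupp φmem).eventually_lt_const (by linarith)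
  -- compact part: dominated convergence
  set S : Set ℝ := Set.Icc (-(K+1)) (K+1) with hS
  obtain ⟨x₀, hx₀S, hx₀min'⟩ :=
    isCompact_Icc.exists_isMinOn (f := h₀) (s := S)
      ⟨0, Set.mem_Icc.2 ⟨by linarith, by linarith⟩⟩ h₀cont.continuousOn
  have hx₀min : ∀ y ∈ S, h₀ x₀ ≤ h₀ y := fun y hy => hx₀min' hy
  set m : ℝ := h₀ x₀ with hm
  have hm0 : 0 < m := h₀pos x₀
  have hlower : ∀ᶠ n in atTop, ∀ x ∈ S, m / 2 ≤ h n x := by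
    have := (Metric.tendstoUniformlyOn_iff.1 (hunif S isCompact_Icc)) (m/2) (by linarith)
    filter_upwards [this] with n hn x hxS
    have h1 := hn x hxS
    rw [Real.dist_eq] at h1
    have h2 := hx₀min x hxS
    have := abs_lt.1 h1
    linarith [this.2]
  have htendc : Tendsto (fun n => ∫ x, φ x * F n x) atTop (nhds (∫ x, φ x * F₀ x)) := by
    refine tendsto_integral_filter_of_dominated_convergence
      (S.indicator fun x => 2 / m * (a + b * x ^ 2))
      (Filter.Eventually.of_forall fun n => (φcont.mul (Fcont n)).aestronglyMeasurable)
      ?_ ?_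
      (Filter.Eventually.of_forall fun x => (hFptwise x).const_mul (φ x))
    · filter_upwards [hlower] with n hn
      refine Filter.Eventually.of_forall fun x => ?_
      by_cases hxS : x ∈ S
      · rw [Set.indicator_of_mem hxS, Real.norm_eq_abs, abs_mul,
          abs_of_nonneg (φmem x).1]
        calc φ x * |F n x| ≤ 1 * ((a + b * x ^ 2) / h n x) :=
              mul_le_mul (φmem x).2 (Fbound n x) (abs_nonneg _) zero_le_one
        _ = (a + b * x ^ 2) / h n x := one_mul _
        _ ≤ 2 / m * (a + b * x ^ 2) := by
              rw [div_le_iff₀ (hpos n x)]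
              have h1 := hn x hxS
              calc a + b * x ^ 2 = 2 / m * (a + b * x ^ 2) * (m / 2) := by
                    field_simp
              _ ≤ 2 / m * (a + b * x ^ 2) * h n x := by
                    gcongr
      · have hxabs : K + 1 ≤ |x| := by
          simp only [hS, Set.mem_Icc, not_and_or, not_le] at hxS
          rcases hxS with hx | hx
          · rw [abs_of_nonpos (by linarith)]; linarith
          · rw [abs_of_nonneg (by linarith)]; linarith
        rw [Set.indicator_of_notMem hxS, φzero x hxabs]
        simp
    · rw [integrable_indicator_iff measurableSet_Icc]
      exact ((continuous_const.mul
        (continuous_const.add (continuous_const.mul (continuous_pow 2)))).continuousOn).integrableOn_Icc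
  have hAev : ∀ᶠ n in atTop, |(∫ x, φ x * F n x) - ∫ x, φ x * F₀ x| < ε / 2 := by
    have := (Metric.tendsto_nhds.1 htendc) (ε/2) (by positivity)
    filter_upwards [this] with n hn
    rwa [Real.dist_eq] at hn
  -- combine
  have int1 : ∀ n, Integrable (fun x => (1 - φ x) * F n x) := by
    intro n
    refine (hint n).mono' ((continuous_const.sub φcont).mul (Fcont n)).aestronglyMeasurable
      (Filter.Eventually.of_forall fun x => ?_)
    rw [Real.norm_eq_abs, abs_mul,
      abs_of_nonneg (by linarith [(φmem x).2] : (0:ℝ) ≤ 1 - φ x)]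
    calc (1 - φ x) * |F n x| ≤ 1 * ((a + b * x ^ 2) / h n x) :=
          mul_le_mul (by linarith [(φmem x).1]) (Fbound n x) (abs_nonneg _) zero_le_one
    _ = _ := one_mul _
  have int1₀ : Integrable (fun x => (1 - φ x) * F₀ x) := by
    refine h₀int.mono' ((continuous_const.sub φcont).mul F₀cont).aestronglyMeasurable
      (Filter.Eventually.of_forall fun x => ?_)
    rw [Real.norm_eq_abs, abs_mul,
      abs_of_nonneg (by linarith [(φmem x).2] : (0:ℝ) ≤ 1 - φ x)]
    calc (1 - φ x) * |F₀ x| ≤ 1 * ((a + b * x ^ 2) / h₀ x) :=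
          mul_le_mul (by linarith [(φmem x).1]) (F₀bound x) (abs_nonneg _) zero_le_one
    _ = _ := one_mul _
  have habs : ∀ n, |∫ x, (1 - φ x) * F n x| ≤ ∫ x, (a + b * x ^ 2) / h n x * (1 - φ x) := by
    intro n
    calc |∫ x, (1 - φ x) * F n x| = ‖∫ x, (1 - φ x) * F n x‖ := (Real.norm_eq_abs _).symm
    _ ≤ ∫ x, ‖(1 - φ x) * F n x‖ := norm_integral_le_integral_norm _
    _ ≤ ∫ x, (a + b * x ^ 2) / h n x * (1 - φ x) := by
          refine integral_mono (int1 n).norm (intg1φ n) fun x => ?_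
          rw [Real.norm_eq_abs, abs_mul,
            abs_of_nonneg (by linarith [(φmem x).2] : (0:ℝ) ≤ 1 - φ x),
            mul_comm ((a + b * x ^ 2) / h n x)]
          exact mul_le_mul_of_nonneg_left (Fbound n x) (by linarith [(φmem x).2])
  have habs₀ : |∫ x, (1 - φ x) * F₀ x| ≤ ∫ x, (a + b * x ^ 2) / h₀ x * (1 - φ x) := by
    calc |∫ x, (1 - φ x) * F₀ x| = ‖∫ x, (1 - φ x) * F₀ x‖ := (Real.norm_eq_abs _).symm
    _ ≤ ∫ x, ‖(1 - φ x) * F₀ x‖ := norm_integral_le_integral_norm _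
    _ ≤ ∫ x, (a + b * x ^ 2) / h₀ x * (1 - φ x) := by
          refine integral_mono int1₀.norm intg1φ₀ fun x => ?_
          rw [Real.norm_eq_abs, abs_mul,
            abs_of_nonneg (by linarith [(φmem x).2] : (0:ℝ) ≤ 1 - φ x),
            mul_comm ((a + b * x ^ 2) / h₀ x)]
          exact mul_le_mul_of_nonneg_left (F₀bound x) (by linarith [(φmem x).2])
  have hsplit : ∀ n, (∫ x, F n x) = (∫ x, φ x * F n x) + ∫ x, (1 - φ x) * F n x := by
    intro n
    rw [← integral_add (intφF n) (int1 n)]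
    congr 1
    ext x
    ring
  have hsplit₀ : (∫ x, F₀ x) = (∫ x, φ x * F₀ x) + ∫ x, (1 - φ x) * F₀ x := by
    rw [← integral_add intφF₀ int1₀]
    congr 1
    ext x
    ring
  obtain ⟨N, hN⟩ := eventually_atTop.1 (hAev.and hBev)
  refine ⟨N, fun n hn => ?_⟩
  obtain ⟨hA, hB⟩ := hN n hn
  have e1 := abs_lt.1 hA
  have e2 := abs_lt.1 (lt_of_le_of_lt (habs n) hB)
  have e3 := abs_lt.1 (lt_of_le_of_lt habs₀ hL)
  rw [Real.dist_eq, hsplit n, hsplit₀, abs_lt]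
  constructor <;> linarith
end
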